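/- arXiv:0901.2710 — 4 statements merged into one kernel-verified Lean document; each statement's English description precedes it below -/
import Mathlib

section
/- Let σ : A → M_n(A) be an algebra homomorphism with entries σ_ij, and let A^n_σ be the free left A-module with basis ω₁, …, ω_n and right A-action determined by ω_i·a = Σ_j σ_ij(a) ω_j. Then there exists an algebra homomorphism σ̄ : A → M_n(A) such that σᵀ • σ̄ = 𝕀 = σ̄ • σᵀ (in M_n(End_k(A))) if and only if ω₁, …, ω_n is also a basis of A^n_σ as a right A-module. -/
/-!
View `τ : A → M_n(A)` as the matrix `(τ_ij)` of additive endomorphisms of `A`; it acts on `A^n`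
by `act τ`, and `σᵀ` acts by `actTranspose σ`, which in left coordinates of `A^n_σ` is
`(a_i) ↦ Σ_i ω_i · a_i`. Testing on the vectors `Pi.single j a`, the two identities for `σ̄`
say exactly that `act σ̄` is a two-sided inverse of `actTranspose σ`.

Conversely, if `actTranspose σ` is bijective, put
`σ̄(a)_il := (actTranspose σ)⁻¹ (Pi.single l a) i`. It is multiplicative because
`actTranspose σ` is a map of right modules `A^n → A^n_σ`,
`actTranspose σ (v a) = actTranspose σ v ᵥ* σ a`, and it fixes scalars because `σ` does.
-/

open Matrix

namespace Stmt5

theorem eq_id_iff_apply_single {ι M : Type*} [Finite ι] [DecidableEq ι] [AddCommMonoid M]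
    (f : (ι → M) →+ (ι → M)) :
    f = .id _ ↔ ∀ i j a, f (Pi.single j a) i = if i = j then a else 0 := by
  refine ⟨fun h i j a => by simp [h, Pi.single_apply], fun h => ?_⟩
  refine AddMonoidHom.functions_ext _ _ _ fun j a => funext fun i => ?_
  simp [h, Pi.single_apply]

section

variable {ι A F : Type*} [Fintype ι] [Semiring A] [FunLike F A (Matrix ι ι A)]

section AddMonoidHomClass

variable [AddMonoidHomClass F A (Matrix ι ι A)]

def act (τ : F) : (ι → A) →+ (ι → A) where
  toFun w i := ∑ j, τ (w j) i j
  map_zero' := by ext; simp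
  map_add' v w := by ext; simp [Finset.sum_add_distrib]

def actTranspose (σ : F) : (ι → A) →+ (ι → A) where
  toFun v j := ∑ i, σ (v i) i j
  map_zero' := by ext; simp
  map_add' v w := by ext; simp [Finset.sum_add_distrib]

theorem act_apply (τ : F) (w : ι → A) (i : ι) : act τ w i = ∑ j, τ (w j) i j := rfl

theorem actTranspose_apply (σ : F) (v : ι → A) (j : ι) :
    actTranspose σ v j = ∑ i, σ (v i) i j := rfl

variable [DecidableEq ι]

theorem act_single (τ : F) (j : ι) (a : A) : act τ (Pi.single j a) = fun i => τ a i j := by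
  ext i
  rw [act_apply, Finset.sum_eq_single j] <;> simp +contextual

theorem actTranspose_single (σ : F) (i : ι) (a : A) :
    actTranspose σ (Pi.single i a) = σ a i := by
  ext j
  rw [actTranspose_apply, Finset.sum_eq_single i] <;> simp +contextual

theorem actTranspose_comp_act_eq_id_iff (σ τ : F) :
    (actTranspose σ).comp (act τ) = .id _ ↔
      ∀ i j a, ∑ l, σ (τ a l j) l i = if i = j then a else 0 := by
  simp [eq_id_iff_apply_single, act_single, actTranspose_apply]

theorem act_comp_actTranspose_eq_id_iff (σ τ : F) :
    (act τ).comp (actTranspose σ) = .id _ ↔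
      ∀ i j a, ∑ l, τ (σ a j l) i l = if i = j then a else 0 := by
  simp [eq_id_iff_apply_single, actTranspose_single, act_apply]

end AddMonoidHomClass

variable [DecidableEq ι]

theorem actTranspose_mul_right [RingHomClass F A (Matrix ι ι A)] (σ : F) (v : ι → A) (a : A) :
    actTranspose σ (fun i => v i * a) = actTranspose σ v ᵥ* σ a := by
  ext j
  simp only [actTranspose_apply, map_mul, mul_apply, vecMul, dotProduct, Finset.sum_mul]
  exact Finset.sum_comm

theorem actTranspose_single_of_eq_scalar [RingHomClass F A (Matrix ι ι A)] {σ : F} {a : A}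
    (ha : σ a = scalar ι a) (l : ι) : actTranspose σ (Pi.single l a) = Pi.single l a := by
  rw [actTranspose_single, ha, scalar_apply]
  exact row_diagonal _ l

end

section Inverse

variable {R ι A : Type*} [CommSemiring R] [Fintype ι] [DecidableEq ι] [Semiring A] [Algebra R A]
  {σ : A →ₐ[R] Matrix ι ι A} (hσ : Function.Bijective (actTranspose σ))

theorem ofBijective_symm_single_mul (a b : A) (l : ι) :
    (AddEquiv.ofBijective _ hσ).symm (Pi.single l (a * b)) = fun i =>
      ∑ m, (AddEquiv.ofBijective _ hσ).symm (Pi.single m a) i *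
        (AddEquiv.ofBijective _ hσ).symm (Pi.single l b) m := by
  set c := (AddEquiv.ofBijective _ hσ).symm (Pi.single l b)
  have hc : ∑ m, (σ (c m)).row m = Pi.single l b := by
    rw [← AddEquiv.ofBijective_apply_symm_apply _ hσ (n := Pi.single l b)]
    ext j
    simp [c, actTranspose_apply, Finset.sum_apply, row]
  rw [AddEquiv.symm_apply_eq, AddEquiv.ofBijective_apply, ← Finset.sum_fn, map_sum]
  simp only [actTranspose_mul_right, AddEquiv.ofBijective_apply_symm_apply, single_vecMul]
  rw [← Finset.smul_sum, hc, ← Pi.single_smul, smul_eq_mul]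

theorem ofBijective_symm_single_of_eq_scalar {a : A} (ha : σ a = scalar ι a) (l : ι) :
    (AddEquiv.ofBijective _ hσ).symm (Pi.single l a) = Pi.single l a := by
  rw [AddEquiv.symm_apply_eq, AddEquiv.ofBijective_apply, actTranspose_single_of_eq_scalar ha]

noncomputable def inverseAlgHom : A →ₐ[R] Matrix ι ι A where
  toFun a := of fun i l => (AddEquiv.ofBijective _ hσ).symm (Pi.single l a) i
  map_one' := by
    ext i l
    rw [of_apply, ofBijective_symm_single_of_eq_scalar hσ (by simp), Pi.single_apply, one_apply]
  map_mul' a b := by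
    ext i l
    simp [mul_apply, ofBijective_symm_single_mul]
  map_zero' := by ext; simp
  map_add' a b := by ext; simp [Pi.single_add]
  commutes' r := by
    have hr : σ (algebraMap R A r) = scalar ι (algebraMap R A r) := by
      rw [AlgHom.commutes, algebraMap_eq_diagonal, scalar_apply]; rfl
    ext i l
    rw [of_apply, ofBijective_symm_single_of_eq_scalar hσ hr, Pi.single_apply,
      algebraMap_matrix_apply]

theorem act_inverseAlgHom :
    act (inverseAlgHom hσ) = ((AddEquiv.ofBijective _ hσ).symm : (ι → A) →+ (ι → A)) := by
  refine AddMonoidHom.functions_ext _ _ _ fun j a => ?_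
  rw [act_single]
  rfl

end Inverse

variable {k A : Type*} [Field k] [Ring A] [Algebra k A] {n : ℕ}

/--
For an algebra map `σ : A → M_n(A)` (entries `σ_ij a = σ a i j`),
there exists an algebra map `σ̄ : A → M_n(A)` such that
`σᵀ • σ̄ = 𝕀 = σ̄ • σᵀ` in `M_n(End_k A)`, i.e.
`Σ_l σ_li(σ̄_lj(a)) = δ_ij a` and `Σ_l σ̄_il(σ_jl(a)) = δ_ij a`,
if and only if `ω₁, …, ω_n` is a basis of `A^n_σ` as a right `A`-module, i.e. the
map `(a_i)_i ↦ Σ_i ω_i · a_i = (Σ_i σ_ij(a_i))_j` is bijective.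
-/
theorem exists_sigmaBar_iff_rightBasis (σ : A →ₐ[k] Matrix (Fin n) (Fin n) A) :
    (∃ σbar : A →ₐ[k] Matrix (Fin n) (Fin n) A,
      (∀ (i j : Fin n) (a : A),
        (∑ l, σ (σbar a l j) l i) = if i = j then a else 0) ∧
      (∀ (i j : Fin n) (a : A),
        (∑ l, σbar (σ a j l) i l) = if i = j then a else 0)) ↔
    Function.Bijective (fun (v : Fin n → A) (j : Fin n) => ∑ i, σ (v i) i j) := by
  change _ ↔ Function.Bijective (actTranspose σ)
  simp only [← actTranspose_comp_act_eq_id_iff, ← act_comp_actTranspose_eq_id_iff]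
  constructor
  · rintro ⟨σbar, hright, hleft⟩
    exact Function.bijective_iff_has_inverse.2
      ⟨act σbar, DFunLike.congr_fun hleft, DFunLike.congr_fun hright⟩
  · intro hσ
    refine ⟨inverseAlgHom hσ, ?_, ?_⟩ <;> rw [act_inverseAlgHom]
    exacts [AddMonoidHom.ext (AddEquiv.ofBijective _ hσ).apply_symm_apply,
      AddMonoidHom.ext (AddEquiv.ofBijective _ hσ).symm_apply_apply]

end Stmt5
end

section
/- Let (∂, σ) be a right twisted multi-derivation on A such that σ, viewed in M_n(End_k(A)), is upper-triangular (σ_ij = 0 for i > j) with non-zero diagonal entries. Then (∂, σ) is a free right twisted multi-derivation with σ̄ lower-triangular if and only if all diagonal entries σ_ii (i = 1, …, n) are invertible in End_k(A). -/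
/-!
View `σ` as the matrix `S = (σ_ij)` over the ring `End_k(A)`. Freeness with `σ̄`
lower-triangular says that `Sᵀ` has a lower-triangular two-sided inverse `σ̄`, and that `σ̄ᵀ` has
an inverse `σ̂`, where both inverses must again come from algebra maps `A → M_n(A)`.

Over any ring, a triangular matrix has a triangular two-sided inverse iff its diagonal entries
are units: write it as `D (1 + X)` with `D` diagonal and `X` strictly triangular, hence
nilpotent. The algebra-map condition is automatic: `Sᵀ` acts on `Aⁿ` by
`Φ x = ∑ i, (row i of σ (x i))`, so that `Φ (x c) = Φ x ⬝ σ c`; an inverse `Ψ` then satisfies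
`Ψ (y ⬝ σ c) = Ψ y c`, which forces the entries `a ↦ Ψ (a eⱼ)ᵢ` of `Ψ` to be multiplicative.
-/

open Function Matrix

namespace Matrix

variable {R α m : Type*} [LinearOrder α] [Fintype m] {b : m → α}

lemma BlockTriangular.mul_apply_self [NonUnitalNonAssocSemiring R] {M N : Matrix m m R}
    (hM : M.BlockTriangular b) (hN : N.BlockTriangular b) (hb : Injective b) (i : m) :
    (M * N) i i = M i i * N i i := by
  rw [mul_apply]
  refine Finset.sum_eq_single i (fun l _ hl => ?_) (by simp)
  rcases lt_or_gt_of_ne (hb.ne hl) with h | h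
  · rw [hM h, zero_mul]
  · rw [hN h, mul_zero]

lemma BlockTriangular.isUnit_apply_self [DecidableEq m] [Semiring R] {M N : Matrix m m R}
    (hM : M.BlockTriangular b) (hN : N.BlockTriangular b) (hb : Injective b)
    (hMN : M * N = 1) (hNM : N * M = 1) (i : m) : IsUnit (M i i) :=
  isUnit_iff_exists.2 ⟨N i i, by rw [← hM.mul_apply_self hN hb, hMN, one_apply_eq],
    by rw [← hN.mul_apply_self hM hb, hNM, one_apply_eq]⟩

lemma pow_apply_eq_zero_of_lt_add [DecidableEq m] [Semiring R] {X : Matrix m m R} (r : m → ℕ)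
    (hX : ∀ i j, r j ≤ r i → X i j = 0) (k : ℕ) (i j : m) (h : r j < r i + k) :
    (X ^ k) i j = 0 := by
  induction k generalizing j with
  | zero => exact one_apply_ne (by rintro rfl; omega)
  | succ k ih =>
    rw [pow_succ, mul_apply]
    refine Finset.sum_eq_zero fun l _ => ?_
    by_cases hl : r j ≤ r l
    · rw [hX l j hl, mul_zero]
    · rw [ih l (by omega), zero_mul]

lemma isNilpotent_of_apply_eq_zero_of_le [DecidableEq m] [Semiring R] {X : Matrix m m R}
    (hX : ∀ i j, b j ≤ b i → X i j = 0) : IsNilpotent X := by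
  let r : m → ℕ := fun i => (Finset.univ.filter fun l => b l < b i).card
  have hr : ∀ i j, b i < b j → r i < r j := by
    refine fun i j hij => Finset.card_lt_card ⟨fun l hl => ?_, fun h => ?_⟩
    · simp only [Finset.mem_filter] at hl ⊢
      exact ⟨hl.1, hl.2.trans hij⟩
    · simpa using h (Finset.mem_filter.2 ⟨Finset.mem_univ i, hij⟩)
  have hr_lt : ∀ j, r j < Fintype.card m := fun j =>
    Finset.card_lt_card ⟨Finset.subset_univ _, fun h => by simpa using h (Finset.mem_univ j)⟩
  have hX' : ∀ i j, r j ≤ r i → X i j = 0 := fun i j hij =>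
    hX i j (not_lt.1 fun h => (hr i j h).not_ge hij)
  exact ⟨Fintype.card m, ext fun i j =>
    pow_apply_eq_zero_of_lt_add r hX' _ i j ((hr_lt j).trans_le (Nat.le_add_left _ _))⟩

variable (R b) in
def blockTriangularSubring [DecidableEq m] [Ring R] : Subring (Matrix m m R) :=
  (blockTriangularSubsemiring R b).toSubring blockTriangular_one.neg

theorem BlockTriangular.exists_blockTriangular_inverse [DecidableEq m] [Ring R]
    {M : Matrix m m R} (hM : M.BlockTriangular b) (hb : Injective b) (hd : ∀ i, IsUnit (M i i)) :
    ∃ N : Matrix m m R, N.BlockTriangular b ∧ N * M = 1 ∧ M * N = 1 := by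
  let S := blockTriangularSubring R b
  let D : S := ⟨diagonal fun i => M i i, blockTriangular_diagonal _⟩
  let D' : S := ⟨diagonal fun i => ↑(hd i).unit⁻¹, blockTriangular_diagonal _⟩
  have hDD' : D * D' = 1 := Subtype.ext <| by simp [D, D', diagonal_mul_diagonal]
  have hD'D : D' * D = 1 := Subtype.ext <| by simp [D, D', diagonal_mul_diagonal]
  let X : S := D' * (⟨M, hM⟩ - D)
  have hX_strict : ∀ i j, b j ≤ b i → (X : Matrix m m R) i j = 0 := by
    intro i j hij
    rcases hij.lt_or_eq with h | h
    · simp [X, D, D', hM h, diagonal_apply_ne _ (ne_of_apply_ne b h.ne')]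
    · obtain rfl := hb h
      simp [X, D, D']
  have hX : IsNilpotent X := by
    obtain ⟨k, hk⟩ := isNilpotent_of_apply_eq_zero_of_le hX_strict
    exact ⟨k, Subtype.ext (by simpa using hk)⟩
  have hMX : (⟨M, hM⟩ : S) = D * (1 + X) := by
    rw [mul_one_add, ← mul_assoc, hDD', one_mul, add_sub_cancel]
  obtain ⟨u, hu⟩ : IsUnit (⟨M, hM⟩ : S) :=
    hMX ▸ (isUnit_iff_exists.2 ⟨D', hDD', hD'D⟩).mul hX.isUnit_one_add
  refine ⟨(↑u⁻¹ : S), (↑u⁻¹ : S).2, ?_, ?_⟩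
  · simpa [hu] using congrArg Subtype.val u.inv_mul
  · simpa [hu] using congrArg Subtype.val u.mul_inv

end Matrix

namespace Stmt6

section EndMatrix

variable {k A ι : Type*} [CommSemiring k] [Semiring A] [Algebra k A] [Fintype ι] [DecidableEq ι]

def endMatrix (σ : A →ₐ[k] Matrix ι ι A) : Matrix ι ι (Module.End k A) :=
  of fun i j => entryLinearMap k A i j ∘ₗ σ.toLinearMap

@[simp]
lemma endMatrix_apply (σ : A →ₐ[k] Matrix ι ι A) (i j : ι) (a : A) :
    endMatrix σ i j a = σ a i j :=
  rfl

lemma endMatrix_blockTriangular_iff {β : Type*} [LT β] {b : ι → β}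
    (σ : A →ₐ[k] Matrix ι ι A) :
    (endMatrix σ).BlockTriangular b ↔ ∀ i j, b j < b i → ∀ a, σ a i j = 0 := by
  simp only [Matrix.BlockTriangular, LinearMap.ext_iff, endMatrix_apply, LinearMap.zero_apply]

def transposeEnd (σ : A →ₐ[k] Matrix ι ι A) : Module.End k (ι → A) :=
  (endVecRingEquivMatrixEnd ι k A).symm (endMatrix σ)ᵀ

lemma transposeEnd_apply (σ : A →ₐ[k] Matrix ι ι A) (x : ι → A) (p : ι) :
    transposeEnd σ x p = ∑ i, σ (x i) i p :=
  rfl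

lemma transposeEnd_mul_right (σ : A →ₐ[k] Matrix ι ι A) (x : ι → A) (c : A) :
    transposeEnd σ (fun i => x i * c) = transposeEnd σ x ᵥ* σ c := by
  ext p
  simp only [transposeEnd_apply, map_mul, mul_apply, vecMul, dotProduct, Finset.sum_mul]
  exact Finset.sum_comm

lemma smul_transposeEnd (σ : A →ₐ[k] Matrix ι ι A) (a : A) (x : ι → A) :
    a • transposeEnd σ x = ∑ q, Pi.single q a ᵥ* σ (x q) := by
  ext p
  simp [transposeEnd_apply, Finset.mul_sum]

lemma transposeEnd_single_one (σ : A →ₐ[k] Matrix ι ι A) (j : ι) :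
    transposeEnd σ (Pi.single j 1) = Pi.single j 1 := by
  ext p
  rw [transposeEnd_apply, Finset.sum_eq_single j (fun i _ hij => by simp [hij]) (by simp)]
  simp [one_apply, Pi.single_apply, eq_comm]

theorem exists_algHom_endMatrix_eq (σ : A →ₐ[k] Matrix ι ι A)
    (T : Matrix ι ι (Module.End k A))
    (h₁ : T * (endMatrix σ)ᵀ = 1) (h₂ : (endMatrix σ)ᵀ * T = 1) :
    ∃ ρ : A →ₐ[k] Matrix ι ι A, endMatrix ρ = T := by
  set e := endVecRingEquivMatrixEnd ι k A
  set Ψ := e.symm T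
  have hΨΦ : Ψ * transposeEnd σ = 1 := by
    rw [transposeEnd, ← map_mul, h₁, map_one]
  have hΦΨ : transposeEnd σ * Ψ = 1 := by
    rw [transposeEnd, ← map_mul, h₂, map_one]
  have hT : ∀ i j a, T i j a = Ψ (Pi.single j a) i := by
    intro i j a
    rw [← e.apply_symm_apply T]
    rfl
  have hΨ_vecMul : ∀ y c, Ψ (y ᵥ* σ c) = fun i => Ψ y i * c := by
    intro y c
    have hy : transposeEnd σ (Ψ y) = y := by
      rw [← Module.End.mul_apply, hΦΨ, Module.End.one_apply]
    rw [← hy, ← transposeEnd_mul_right, ← Module.End.mul_apply, hΨΦ, Module.End.one_apply,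
      hy]
  refine ⟨AlgHom.ofLinearMap
    { toFun := fun a => of fun i j => T i j a
      map_add' := fun a b => by ext; simp
      map_smul' := fun c a => by ext; simp } ?_ ?_, ?_⟩
  · ext i j
    rw [LinearMap.coe_mk, AddHom.coe_mk, of_apply, hT, ← transposeEnd_single_one σ j,
      ← Module.End.mul_apply, hΨΦ, Module.End.one_apply]
    simp [Pi.single_apply, one_apply]
  · intro a b
    ext i m
    have hsingle : Pi.single m (a * b) = a • transposeEnd σ (Ψ (Pi.single m b)) := by
      rw [← Module.End.mul_apply, hΦΨ, Module.End.one_apply, ← smul_eq_mul, Pi.single_smul']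
    show T i m (a * b) = ∑ q, T i q a * T q m b
    rw [hT, hsingle, smul_transposeEnd, map_sum, Finset.sum_apply]
    simp only [hΨ_vecMul, hT]
  · ext i j a
    rfl

lemma mul_transpose_endMatrix_eq_one_iff (σ ρ : A →ₐ[k] Matrix ι ι A) :
    endMatrix ρ * (endMatrix σ)ᵀ = 1 ↔
      ∀ i j a, ∑ l, ρ (σ a j l) i l = if i = j then a else 0 := by
  rw [← Matrix.ext_iff]
  refine forall₂_congr fun i j => ?_
  rw [LinearMap.ext_iff]
  refine forall_congr' fun a => ?_
  rcases eq_or_ne i j with rfl | hij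
  · simp [Matrix.mul_apply]
  · simp [Matrix.mul_apply, hij]

lemma transpose_endMatrix_mul_eq_one_iff (σ ρ : A →ₐ[k] Matrix ι ι A) :
    (endMatrix σ)ᵀ * endMatrix ρ = 1 ↔
      ∀ i j a, ∑ l, σ (ρ a l j) l i = if i = j then a else 0 := by
  rw [← Matrix.ext_iff]
  refine forall₂_congr fun i j => ?_
  rw [LinearMap.ext_iff]
  refine forall_congr' fun a => ?_
  rcases eq_or_ne i j with rfl | hij
  · simp [Matrix.mul_apply]
  · simp [Matrix.mul_apply, hij]

end EndMatrix

variable {k A : Type*} [Field k] [Ring A] [Algebra k A] {n : ℕ}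

/-- The freeness conditions of Definition 2.1:
`σ̄ • σᵀ = σᵀ • σ̄ = 𝕀` and `σ̂ • σ̄ᵀ = σ̄ᵀ • σ̂ = 𝕀` in `M_n(End_k A)`. -/
def IsFreePair (σ σbar σhat : A →ₐ[k] Matrix (Fin n) (Fin n) A) : Prop :=
  (∀ (i j : Fin n) (a : A),
      (∑ l, σbar (σ a j l) i l) = if i = j then a else 0) ∧
  (∀ (i j : Fin n) (a : A),
      (∑ l, σ (σbar a l j) l i) = if i = j then a else 0) ∧
  (∀ (i j : Fin n) (a : A),
      (∑ l, σhat (σbar a j l) i l) = if i = j then a else 0) ∧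
  (∀ (i j : Fin n) (a : A),
      (∑ l, σbar (σhat a l j) l i) = if i = j then a else 0)

lemma isFreePair_iff (σ σbar σhat : A →ₐ[k] Matrix (Fin n) (Fin n) A) :
    IsFreePair σ σbar σhat ↔
      (endMatrix σbar * (endMatrix σ)ᵀ = 1 ∧ (endMatrix σ)ᵀ * endMatrix σbar = 1) ∧
      (endMatrix σhat * (endMatrix σbar)ᵀ = 1 ∧
        (endMatrix σbar)ᵀ * endMatrix σhat = 1) := by
  simp only [IsFreePair, mul_transpose_endMatrix_eq_one_iff, transpose_endMatrix_mul_eq_one_iff,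
    and_assoc]

theorem triangular_free_iff_general
    (σ : A →ₐ[k] Matrix (Fin n) (Fin n) A)
    (htri : ∀ (i j : Fin n), j < i → ∀ a : A, σ a i j = 0) :
    (∃ σbar σhat : A →ₐ[k] Matrix (Fin n) (Fin n) A,
      (∀ (i j : Fin n), i < j → ∀ a : A, σbar a i j = 0) ∧
      IsFreePair σ σbar σhat) ↔
    (∀ i : Fin n, Function.Bijective (fun a : A => σ a i i)) := by
  have hσ : (endMatrix σ)ᵀ.IsLowerTriangular := fun i j h =>
    (endMatrix_blockTriangular_iff σ).2 htri h
  have hlower : ∀ ρ : A →ₐ[k] Matrix (Fin n) (Fin n) A,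
      (endMatrix ρ).IsLowerTriangular ↔ ∀ i j : Fin n, i < j → ∀ a, ρ a i j = 0 :=
    fun ρ => endMatrix_blockTriangular_iff ρ
  simp_rw [isFreePair_iff, ← hlower]
  constructor
  · rintro ⟨σbar, -, hbar, ⟨h₁, h₂⟩, -⟩ i
    exact (Module.End.isUnit_iff _).1
      (hσ.isUnit_apply_self hbar OrderDual.toDual.injective h₂ h₁ i)
  · intro hbij
    obtain ⟨T, hT, h₁, h₂⟩ := hσ.exists_blockTriangular_inverse OrderDual.toDual.injective
      fun i => (Module.End.isUnit_iff _).2 (hbij i)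
    obtain ⟨σbar, rfl⟩ := exists_algHom_endMatrix_eq σ T h₁ h₂
    have hbar_upper : (endMatrix σbar)ᵀ.IsUpperTriangular := fun i j h => hT h
    obtain ⟨T', -, h₁', h₂'⟩ := hbar_upper.exists_blockTriangular_inverse injective_id
      (hT.isUnit_apply_self hσ OrderDual.toDual.injective h₁ h₂)
    obtain ⟨σhat, rfl⟩ := exists_algHom_endMatrix_eq σbar T' h₁' h₂'
    exact ⟨σbar, σhat, hT, ⟨h₁, h₂⟩, h₁', h₂'⟩

/--
Let `(del, σ)` be a right twisted multi-derivation
(`del_i(ab) = Σ_j del_j(a) σ_ji(b) + a del_i(b)`) in which `σ` is upper-triangular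
(`σ_ij = 0` for `i > j`) with non-zero diagonal entries.  Then `(del, σ)` is free
with `σ̄` lower-triangular if and only if all diagonal entries `σ_ii` are
invertible in `End_k(A)`.
-/
theorem triangular_free_iff
    (σ : A →ₐ[k] Matrix (Fin n) (Fin n) A) (del : Fin n → (A →ₗ[k] A))
    (hder : ∀ (a b : A) (i : Fin n),
      del i (a * b) = (∑ j, del j a * σ b j i) + a * del i b)
    (htri : ∀ (i j : Fin n), j < i → ∀ a : A, σ a i j = 0)
    (hdiag : ∀ i : Fin n, ∃ a : A, σ a i i ≠ 0) :
    (∃ σbar σhat : A →ₐ[k] Matrix (Fin n) (Fin n) A,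
      (∀ (i j : Fin n), i < j → ∀ a : A, σbar a i j = 0) ∧
      IsFreePair σ σbar σhat) ↔
    (∀ i : Fin n, Function.Bijective (fun a : A => σ a i i)) :=
  triangular_free_iff_general σ htri

end Stmt6
end

section
/- Let (∂, σ; σ̄, σ̂) be a free right twisted multi-derivation on A and let Ω¹(A) = A^n_σ be the associated first order differential calculus with left A-basis ω₁, …, ω_n and d(a) = Σ_i ∂_i(a) ω_i. Let ξ_i : Ω¹(A) → A be the right A-module maps determined by ξ_i(ω_j) = δ_ij. Then there exists a unique hom-connection ∇ : Hom_A(Ω¹(A), A) → A such that ∇(ξ_i) = 0 for all i = 1, …, n; explicitly, ∇(f) = Σ_i ∂_i^σ(f(ω_i)), where ∂_i^σ = Σ_{j,k} σ̄_kj ∘ ∂_j ∘ σ̂_ki. -/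
/-!
# Statement 7

Let `(∂, σ; σ̄, σ̂)` be a free right twisted multi-derivation on `A` and let
`Ω¹(A) = A^n_σ` be the associated first order differential calculus: the free left
`A`-module `Fin n → A` with left basis `ω_i` (the standard basis vectors), right
`A`-action `x · a = (Σ_j x_j σ_ji(a))_i` and `d(a) = (∂_i a)_i = Σ_i ∂_i(a) ω_i`.
Let `ξ_i ∈ Hom_A(Ω¹(A), A)` be the right `A`-linear maps with `ξ_i(ω_j) = δ_ij`.
Then there is a unique hom-connection `∇ : Hom_A(Ω¹(A), A) → A` with `∇(ξ_i) = 0`,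
explicitly `∇(f) = Σ_i ∂_i^σ (f ω_i)` with `∂_i^σ = Σ_{j,l} σ̄_lj ∘ ∂_j ∘ σ̂_li`.

Right `A`-linear maps `Ω¹(A) → A` are modelled as `k`-linear maps satisfying
`f(x · a) = f(x) a`; they form a `k`-submodule `homD` of `(Fin n → A) →ₗ[k] A`.
-/

namespace Stmt7

variable {k A : Type*} [Field k] [Ring A] [Algebra k A] {n : ℕ}

/-- The freeness conditions for `(σ, σ̄, σ̂)`. -/
def IsFreePair (σ σbar σhat : A →ₐ[k] Matrix (Fin n) (Fin n) A) : Prop :=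
  (∀ (i j : Fin n) (a : A),
      (∑ l, σbar (σ a j l) i l) = if i = j then a else 0) ∧
  (∀ (i j : Fin n) (a : A),
      (∑ l, σ (σbar a l j) l i) = if i = j then a else 0) ∧
  (∀ (i j : Fin n) (a : A),
      (∑ l, σhat (σbar a j l) i l) = if i = j then a else 0) ∧
  (∀ (i j : Fin n) (a : A),
      (∑ l, σbar (σhat a l j) l i) = if i = j then a else 0)

variable (σ : A →ₐ[k] Matrix (Fin n) (Fin n) A)

/-- The right `A`-action on `Ω¹(A) = A^n_σ` (in left coordinates):
`(x · a)_i = Σ_j x_j σ_ji(a)`. -/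
def ract (x : Fin n → A) (a : A) : Fin n → A := fun i => ∑ j, x j * σ a j i

/-- Left multiplication on `Ω¹(A) = A^n_σ` (coordinatewise), as a `k`-linear map. -/
def lmulPi (a : A) : (Fin n → A) →ₗ[k] (Fin n → A) where
  toFun x := fun i => a * x i
  map_add' x y := by funext i; simp [mul_add]
  map_smul' c x := by funext i; simp [mul_smul_comm]

/-- `Hom_A(Ω¹(A), A)`: the `k`-submodule of `(Fin n → A) →ₗ[k] A` consisting of the
right `A`-linear maps. -/
def homD : Submodule k ((Fin n → A) →ₗ[k] A) where
  carrier := {f | ∀ (x : Fin n → A) (a : A), f (ract σ x a) = f x * a}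
  add_mem' {f g} hf hg := by
    intro x a
    simp only [LinearMap.add_apply, hf x a, hg x a, add_mul]
  zero_mem' := by intro x a; simp
  smul_mem' c f hf := by
    intro x a
    simp only [LinearMap.smul_apply, hf x a, smul_mul_assoc]

/-- The left basis `ω_i` of `Ω¹(A)`. -/
def om (i : Fin n) : Fin n → A := Pi.single i 1

lemma ract_lmulPi (a c : A) (x : Fin n → A) :
    ract σ (lmulPi (k := k) a x) c = lmulPi (k := k) a (ract σ x c) := by
  funext i
  simp [ract, lmulPi, Finset.mul_sum, mul_assoc]

/-- The right action of `a : A` on `f ∈ Hom_A(Ω¹(A), A)`: `(f·a)(x) = f(a • x)`. -/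
def rAct (f : homD σ) (a : A) : homD σ :=
  ⟨f.1 ∘ₗ lmulPi a, by
    intro x c
    simp only [LinearMap.comp_apply]
    rw [← ract_lmulPi, f.2 _ c]⟩

/-- `d : A → Ω¹(A)` in coordinates: `d a = (∂_i a)_i`. -/
def dvec (del : Fin n → (A →ₗ[k] A)) (a : A) : Fin n → A := fun i => del i a

/-- The maps `∂_i^σ = Σ_{j,l} σ̄_lj ∘ ∂_j ∘ σ̂_li`. -/
def delSigma (σbar σhat : A →ₐ[k] Matrix (Fin n) (Fin n) A)
    (del : Fin n → (A →ₗ[k] A)) (i : Fin n) (a : A) : A :=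
  ∑ j, ∑ l, σbar (del j (σhat a l i)) l j

/-- The hom-connection property together with vanishing on the dual basis. -/
def IsHomConnVanishing (del : Fin n → (A →ₗ[k] A)) (ξ : Fin n → homD σ)
    (nabla : homD σ →ₗ[k] A) : Prop :=
  (∀ (f : homD σ) (a : A),
      nabla (rAct σ f a) = nabla f * a + f.1 (dvec del a)) ∧
  (∀ i, nabla (ξ i) = 0)

/-! Evaluating on the basis identifies `f ∈ Hom_A(Ω¹(A), A)` with the row `c = (f ω_l)_l`,
on which `a` acts by `c ↦ c σ̄(a)`, since `σᵀ • σ̄ = 𝕀` gives `a ω_j = Σ_l ω_l σ̄_lj(a)`.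
Applying `σ̂` turns this action into right multiplication by `a` (`σ̂ • σ̄ᵀ = 𝕀`), and `σ̄ᵀ`
undoes `σ̂` (`σ̄ᵀ • σ̂ = 𝕀`). The proposed `∇f` is the divergence `Σ_l Σ_j σ̄_lj(∂_j v_l)` of
`v = σ̂ c`, so the twisted Leibniz rule and `σ̄ • σᵀ = 𝕀` give the hom-connection property.
Conversely `f = Σ_i ξ_i · v_i`, so a hom-connection killing the `ξ_i` must send `f` to
`Σ_i ξ_i(d v_i)`. -/

/-- `τ • ρᵀ = 𝕀`, where `•` is matrix multiplication with composition of entries. -/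
def MulTransposeEqOne (τ ρ : A →ₐ[k] Matrix (Fin n) (Fin n) A) : Prop :=
  ∀ (i j : Fin n) (a : A), (∑ l, τ (ρ a j l) i l) = if i = j then a else 0

/-- `ρᵀ • τ = 𝕀`, where `•` is matrix multiplication with composition of entries. -/
def TransposeMulEqOne (ρ τ : A →ₐ[k] Matrix (Fin n) (Fin n) A) : Prop :=
  ∀ (i j : Fin n) (a : A), (∑ l, ρ (τ a l j) l i) = if i = j then a else 0

section MatrixAction

variable (τ : A →ₐ[k] Matrix (Fin n) (Fin n) A)

def applyVec (c : Fin n → A) : Fin n → A := fun p => ∑ l, τ (c l) p l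

def transposeApplyVec (v : Fin n → A) : Fin n → A := fun q => ∑ l, τ (v l) l q

variable {τ}

lemma applyVec_sum_mul {ρ : A →ₐ[k] Matrix (Fin n) (Fin n) A} (h : MulTransposeEqOne τ ρ)
    (c : Fin n → A) (a : A) :
    applyVec τ (fun i => ∑ l, c l * ρ a l i) = fun p => applyVec τ c p * a := by
  unfold MulTransposeEqOne at h
  funext p
  have hp : ∀ l, ∑ i, τ (c l * ρ a l i) p i = τ (c l) p l * a := fun l => by
    simp only [map_mul, Matrix.mul_apply]
    rw [Finset.sum_comm]
    simp only [← Finset.mul_sum, h, mul_ite, mul_zero, Finset.sum_ite_eq', Finset.mem_univ,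
      if_true]
  simp only [applyVec, map_sum, Matrix.sum_apply, Finset.sum_mul]
  rw [Finset.sum_comm]
  exact Finset.sum_congr rfl fun l _ => hp l

lemma transposeApplyVec_applyVec {ρ : A →ₐ[k] Matrix (Fin n) (Fin n) A}
    (h : TransposeMulEqOne ρ τ) (c : Fin n → A) :
    transposeApplyVec ρ (applyVec τ c) = c := by
  unfold TransposeMulEqOne at h
  funext q
  simp only [transposeApplyVec, applyVec, map_sum, Matrix.sum_apply]
  rw [Finset.sum_comm]
  simp [h]

end MatrixAction

section Divergence

variable (σbar : A →ₐ[k] Matrix (Fin n) (Fin n) A) (del : Fin n → (A →ₗ[k] A))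

def divergence (v : Fin n → A) : A := ∑ l, ∑ j, σbar (del j (v l)) l j

lemma sum_delSigma_eq_divergence (σhat : A →ₐ[k] Matrix (Fin n) (Fin n) A) (c : Fin n → A) :
    ∑ i, delSigma σbar σhat del i (c i) = divergence σbar del (applyVec σhat c) := by
  simp only [delSigma, divergence, applyVec, map_sum, Matrix.sum_apply]
  rw [Finset.sum_comm]
  exact (Finset.sum_congr rfl fun j _ => Finset.sum_comm).trans Finset.sum_comm

variable {σ σbar del}

lemma divergence_mul_right (h : MulTransposeEqOne σbar σ)
    (hder : ∀ (a b : A) (i : Fin n), del i (a * b) = (∑ j, del j a * σ b j i) + a * del i b)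
    (v : Fin n → A) (a : A) :
    divergence σbar del (fun l => v l * a) = divergence σbar del v * a
      + ∑ j, ∑ q, transposeApplyVec σbar v q * σbar (del j a) q j := by
  unfold MulTransposeEqOne at h
  have hl : ∀ l, ∑ j, σbar (del j (v l * a)) l j = (∑ m, σbar (del m (v l)) l m) * a
      + ∑ j, ∑ q, σbar (v l) l q * σbar (del j a) q j := fun l => by
    simp only [hder, map_add, map_sum, map_mul, Matrix.add_apply, Matrix.sum_apply,
      Matrix.mul_apply, Finset.sum_add_distrib, Finset.sum_mul]
    congr 1
    rw [Finset.sum_comm]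
    refine Finset.sum_congr rfl fun m _ => ?_
    rw [Finset.sum_comm]
    simp only [← Finset.mul_sum, h, mul_ite, mul_zero, Finset.sum_ite_eq', Finset.mem_univ,
      if_true]
  simp only [divergence, transposeApplyVec, hl, Finset.sum_add_distrib, Finset.sum_mul]
  congr 1
  rw [Finset.sum_comm]
  exact Finset.sum_congr rfl fun j _ => Finset.sum_comm

end Divergence

section HomModule

variable {σ} {σbar : A →ₐ[k] Matrix (Fin n) (Fin n) A}

lemma sum_lmulPi_om (x : Fin n → A) : ∑ j, lmulPi (k := k) (x j) (om j) = x := by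
  funext i
  simp [lmulPi, om, Pi.single_apply]

lemma lmulPi_om (h : TransposeMulEqOne σ σbar) (a : A) (q : Fin n) :
    lmulPi (k := k) a (om q) = ∑ l, ract σ (om l) (σbar a l q) := by
  unfold TransposeMulEqOne at h
  funext i
  simp [lmulPi, om, ract, Pi.single_apply, h i q a]

lemma rAct_apply_om (h : TransposeMulEqOne σ σbar) (f : homD σ) (a : A) (q : Fin n) :
    (rAct σ f a).1 (om q) = ∑ l, f.1 (om l) * σbar a l q := by
  change f.1 (lmulPi a (om q)) = _
  rw [lmulPi_om h, map_sum]
  exact Finset.sum_congr rfl fun l _ => f.2 _ _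

lemma homD_apply_eq_sum (h : TransposeMulEqOne σ σbar) (f : homD σ) (x : Fin n → A) :
    f.1 x = ∑ j, ∑ l, f.1 (om l) * σbar (x j) l j := by
  conv_lhs => rw [← sum_lmulPi_om (k := k) x, map_sum]
  exact Finset.sum_congr rfl fun j _ => rAct_apply_om h f (x j) j

lemma homD_ext_om (h : TransposeMulEqOne σ σbar) {f g : homD σ}
    (hfg : ∀ q, f.1 (om q) = g.1 (om q)) : f = g :=
  Subtype.ext <| LinearMap.ext fun x => by simp only [homD_apply_eq_sum h _ x, hfg]

variable {ξ : Fin n → homD σ}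

lemma sum_rAct_apply_om (h : TransposeMulEqOne σ σbar)
    (hξ : ∀ i j, (ξ i).1 (om j) = if i = j then (1 : A) else 0) (b : Fin n → A) (q : Fin n) :
    (∑ i, rAct σ (ξ i) (b i)).1 (om q) = transposeApplyVec σbar b q := by
  simp [LinearMap.sum_apply, rAct_apply_om h, hξ, transposeApplyVec]

lemma eq_sum_rAct_of_dual {σhat : A →ₐ[k] Matrix (Fin n) (Fin n) A}
    (h : TransposeMulEqOne σ σbar) (hhat : TransposeMulEqOne σbar σhat)
    (hξ : ∀ i j, (ξ i).1 (om j) = if i = j then (1 : A) else 0) (f : homD σ) :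
    f = ∑ i, rAct σ (ξ i) (applyVec σhat (fun l => f.1 (om l)) i) :=
  homD_ext_om h fun q => by
    rw [sum_rAct_apply_om h hξ, transposeApplyVec_applyVec hhat]

end HomModule

section HomConnection

variable (σbar σhat : A →ₐ[k] Matrix (Fin n) (Fin n) A) (del : Fin n → (A →ₗ[k] A))

def homConnection : homD σ →ₗ[k] A where
  toFun f := ∑ i, delSigma σbar σhat del i (f.1 (om i))
  map_add' f g := by simp [delSigma, Finset.sum_add_distrib]
  map_smul' c f := by simp [delSigma, Finset.smul_sum]

@[simp]
lemma homConnection_apply (f : homD σ) :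
    homConnection σ σbar σhat del f = ∑ i, delSigma σbar σhat del i (f.1 (om i)) :=
  rfl

variable {σ σbar σhat del}

lemma homConnection_rAct (hbarσ : MulTransposeEqOne σbar σ) (hσbar : TransposeMulEqOne σ σbar)
    (hhatbar : MulTransposeEqOne σhat σbar) (hbarhat : TransposeMulEqOne σbar σhat)
    (hder : ∀ (a b : A) (i : Fin n), del i (a * b) = (∑ j, del j a * σ b j i) + a * del i b)
    (f : homD σ) (a : A) :
    homConnection σ σbar σhat del (rAct σ f a)
      = homConnection σ σbar σhat del f * a + f.1 (dvec del a) := by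
  set c : Fin n → A := fun l => f.1 (om l)
  calc homConnection σ σbar σhat del (rAct σ f a)
      = divergence σbar del (applyVec σhat fun i => ∑ l, c l * σbar a l i) := by
        rw [← sum_delSigma_eq_divergence]
        simp only [homConnection_apply, rAct_apply_om hσbar, c]
    _ = divergence σbar del fun p => applyVec σhat c p * a := by rw [applyVec_sum_mul hhatbar]
    _ = divergence σbar del (applyVec σhat c) * a
          + ∑ j, ∑ q, c q * σbar (del j a) q j := by
        rw [divergence_mul_right hbarσ hder, transposeApplyVec_applyVec hbarhat]
    _ = homConnection σ σbar σhat del f * a + f.1 (dvec del a) := by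
        rw [← sum_delSigma_eq_divergence, homD_apply_eq_sum hσbar f]
        rfl

lemma map_one_eq_zero_of_twistedLeibniz
    (hder : ∀ (a b : A) (i : Fin n), del i (a * b) = (∑ j, del j a * σ b j i) + a * del i b)
    (i : Fin n) : del i 1 = 0 := by
  simpa [Matrix.one_apply] using hder 1 1 i

lemma homConnection_apply_dual
    (hder : ∀ (a b : A) (i : Fin n), del i (a * b) = (∑ j, del j a * σ b j i) + a * del i b)
    {ξ : Fin n → homD σ} (hξ : ∀ i j, (ξ i).1 (om j) = if i = j then (1 : A) else 0)
    (i : Fin n) : homConnection σ σbar σhat del (ξ i) = 0 := by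
  simp only [homConnection_apply, hξ]
  refine Finset.sum_eq_zero fun j _ => ?_
  split_ifs <;> simp [delSigma, Matrix.one_apply, apply_ite (del _),
    map_one_eq_zero_of_twistedLeibniz hder]

lemma IsHomConnVanishing.apply_eq_sum_dvec (hσbar : TransposeMulEqOne σ σbar)
    (hbarhat : TransposeMulEqOne σbar σhat) {ξ : Fin n → homD σ}
    (hξ : ∀ i j, (ξ i).1 (om j) = if i = j then (1 : A) else 0)
    {nabla : homD σ →ₗ[k] A} (hn : IsHomConnVanishing σ del ξ nabla) (f : homD σ) :
    nabla f = ∑ i, (ξ i).1 (dvec del (applyVec σhat (fun l => f.1 (om l)) i)) := by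
  conv_lhs => rw [eq_sum_rAct_of_dual hσbar hbarhat hξ f, map_sum]
  simp [hn.1, hn.2]

end HomConnection

/--
**Theorem 3.4.**  Let `(∂, σ; σ̄, σ̂)` be a free right twisted
multi-derivation on `A`, `Ω¹(A) = A^n_σ` the associated calculus and
`ξ_i ∈ Hom_A(Ω¹(A), A)` determined by `ξ_i(ω_j) = δ_ij`.  Then there exists a
unique hom-connection `∇` on `A` with `∇(ξ_i) = 0` for all `i`, and it is given
explicitly by `∇(f) = Σ_i ∂_i^σ(f(ω_i))` where `∂_i^σ = Σ_{j,l} σ̄_lj ∘ ∂_j ∘ σ̂_li`.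
-/
theorem exists_unique_homConnection
    (σbar σhat : A →ₐ[k] Matrix (Fin n) (Fin n) A)
    (hfree : IsFreePair σ σbar σhat)
    (del : Fin n → (A →ₗ[k] A))
    (hder : ∀ (a b : A) (i : Fin n),
      del i (a * b) = (∑ j, del j a * σ b j i) + a * del i b)
    (ξ : Fin n → homD σ)
    (hξ : ∀ i j, (ξ i).1 (om j) = if i = j then (1 : A) else 0) :
    (∃! nabla : homD σ →ₗ[k] A, IsHomConnVanishing σ del ξ nabla) ∧
    (∀ nabla : homD σ →ₗ[k] A, IsHomConnVanishing σ del ξ nabla →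
      ∀ f : homD σ, nabla f = ∑ i, delSigma σbar σhat del i (f.1 (om i))) := by
  obtain ⟨hbarσ, hσbar, hhatbar, hbarhat⟩ := hfree
  have hconn : IsHomConnVanishing σ del ξ (homConnection σ σbar σhat del) :=
    ⟨homConnection_rAct hbarσ hσbar hhatbar hbarhat hder, homConnection_apply_dual hder hξ⟩
  have huniq : ∀ nabla, IsHomConnVanishing σ del ξ nabla →
      nabla = homConnection σ σbar σhat del := fun nabla hn =>
    LinearMap.ext fun f => by
      rw [hn.apply_eq_sum_dvec hσbar hbarhat hξ, hconn.apply_eq_sum_dvec hσbar hbarhat hξ]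
  exact ⟨⟨_, hconn, huniq⟩, fun nabla hn f => by rw [huniq nabla hn]; rfl⟩

end Stmt7
end

section
/- Let (∂, σ; σ̄, σ̂) be a free right twisted multi-derivation on A, and let Ω¹ be any first order differential calculus on A that is generated (not necessarily freely) as a left A-module by elements ω₁, …, ω_n satisfying ω_i·a = Σ_j σ_ij(a) ω_j and d(a) = Σ_i ∂_i(a) ω_i for all a ∈ A. Then the formula ∇(f) = Σ_i ∂_i^σ(f(ω_i)), with ∂_i^σ = Σ_{j,k} σ̄_kj ∘ ∂_j ∘ σ̂_ki, defines a hom-connection on A with respect to Ω¹. -/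
/-!
A direct computation. Writing `a • ω_i = Σ_j ω_j σ̄_ji(a)` and `d a = Σ_i ∂_i(a) ω_i`, the
hom-connection property reduces to the twisted Leibniz rule
`Σ_i ∂_i^σ(x σ̄_ji(a)) = ∂_j^σ(x) a + x Σ_i σ̄_ji(∂_i a)`.
This follows from the twisted Leibniz rule for `∂` once the freeness identities
`σ̂ • σ̄ᵀ = 𝕀`, `σ̄ • σᵀ = 𝕀` and `σ̄ᵀ • σ̂ = 𝕀` are used to collapse the three sums that the
multiplicativity of `σ̂` and `σ̄` produces.
-/

open MulOpposite

namespace Stmt8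

variable {k A : Type*} [Field k] [Ring A] [Algebra k A] {n : ℕ}

/-- `σ̄ • σᵀ = σᵀ • σ̄ = 𝕀` and `σ̂ • σ̄ᵀ = σ̄ᵀ • σ̂ = 𝕀`, written entrywise. -/
def IsFreePair (σ σbar σhat : A →ₐ[k] Matrix (Fin n) (Fin n) A) : Prop :=
  (∀ (i j : Fin n) (a : A),
      (∑ l, σbar (σ a j l) i l) = if i = j then a else 0) ∧
  (∀ (i j : Fin n) (a : A),
      (∑ l, σ (σbar a l j) l i) = if i = j then a else 0) ∧
  (∀ (i j : Fin n) (a : A),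
      (∑ l, σhat (σbar a j l) i l) = if i = j then a else 0) ∧
  (∀ (i j : Fin n) (a : A),
      (∑ l, σbar (σhat a l j) l i) = if i = j then a else 0)

-- Right `A`-modules are modules over `Aᵐᵒᵖ`; `Ω` is an `A`-bimodule.
variable {Ω : Type*} [AddCommGroup Ω] [Module k Ω] [Module A Ω] [Module Aᵐᵒᵖ Ω]
  [SMulCommClass A Aᵐᵒᵖ Ω]

def lmul (a : A) : Ω →ₗ[Aᵐᵒᵖ] Ω where
  toFun ω := a • ω
  map_add' := smul_add a
  map_smul' c ω := smul_comm a c ω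

/-- The maps `∂_i^σ = Σ_{j,l} σ̄_lj ∘ ∂_j ∘ σ̂_li`. -/
def delSigma (σbar σhat : A →ₐ[k] Matrix (Fin n) (Fin n) A)
    (del : Fin n → (A →ₗ[k] A)) (i : Fin n) (a : A) : A :=
  ∑ j, ∑ l, σbar (del j (σhat a l i)) l j

section MatrixIdentities

variable {F : Type*} [FunLike F A (Matrix (Fin n) (Fin n) A)]
  [MulHomClass F A (Matrix (Fin n) (Fin n) A)] (τ : F) (ρ : A → Matrix (Fin n) (Fin n) A)

theorem sum_map_mul_apply_of_comp_transpose_eq_one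
    (h : ∀ (i j : Fin n) (a : A), (∑ l, τ (ρ a j l) i l) = if i = j then a else 0)
    (x a : A) (l j : Fin n) :
    ∑ i, τ (x * ρ a j i) l i = τ x l j * a := by
  calc ∑ i, τ (x * ρ a j i) l i
      = ∑ m, τ x l m * ∑ i, τ (ρ a j i) m i := by
        simp only [map_mul, Matrix.mul_apply, Finset.mul_sum]
        exact Finset.sum_comm
    _ = τ x l j * a := by simp [h]

theorem sum_map_apply_mul_of_transpose_comp_eq_one
    (h : ∀ (i j : Fin n) (a : A), (∑ l, τ (ρ a l j) l i) = if i = j then a else 0)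
    (x b : A) (j p : Fin n) :
    ∑ l, τ (ρ x l j * b) l p = x * τ b j p := by
  calc ∑ l, τ (ρ x l j * b) l p
      = ∑ m, (∑ l, τ (ρ x l j) l m) * τ b m p := by
        simp only [map_mul, Matrix.mul_apply, Finset.sum_mul]
        exact Finset.sum_comm
    _ = x * τ b j p := by simp [h]

end MatrixIdentities

section DelSigma

variable (σ σbar σhat : A →ₐ[k] Matrix (Fin n) (Fin n) A) (del : Fin n → (A →ₗ[k] A))

def delSigmaLinear (i : Fin n) : A →ₗ[k] A where
  toFun := delSigma σbar σhat del i
  map_add' a b := by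
    simp [delSigma, Matrix.add_apply, Finset.sum_add_distrib]
  map_smul' c a := by
    simp [delSigma, Matrix.smul_apply, Finset.smul_sum]

theorem delSigma_leibniz (hfree : IsFreePair σ σbar σhat)
    (hder : ∀ (a b : A) (i : Fin n),
      del i (a * b) = (∑ j, del j a * σ b j i) + a * del i b)
    (x a : A) (j : Fin n) :
    ∑ i, delSigma σbar σhat del i (x * σbar a j i)
      = delSigma σbar σhat del j x * a + x * ∑ i, σbar (del i a) j i := by
  obtain ⟨hσbarσ, -, hσhatσbar, hσbarσhat⟩ := hfree
  have expand (p l : Fin n) : ∑ i, σbar (del p (σhat (x * σbar a j i) l i)) l p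
      = ∑ q, σbar (del q (σhat x l j) * σ a q p) l p + σbar (σhat x l j * del p a) l p := by
    rw [← Matrix.sum_apply, ← map_sum, ← map_sum,
      sum_map_mul_apply_of_comp_transpose_eq_one σhat σbar hσhatσbar, hder,
      map_add, Matrix.add_apply, map_sum, Matrix.sum_apply]
  calc ∑ i, delSigma σbar σhat del i (x * σbar a j i)
      = ∑ p, ∑ l, ∑ i, σbar (del p (σhat (x * σbar a j i) l i)) l p := by
        simp only [delSigma]
        rw [Finset.sum_comm]
        refine Finset.sum_congr rfl fun p _ => ?_
        exact Finset.sum_comm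
    _ = ∑ l, ∑ q, ∑ p, σbar (del q (σhat x l j) * σ a q p) l p
          + ∑ p, ∑ l, σbar (σhat x l j * del p a) l p := by
        simp only [expand, Finset.sum_add_distrib]
        congr 1
        rw [Finset.sum_comm]
        refine Finset.sum_congr rfl fun l _ => Finset.sum_comm
    _ = delSigma σbar σhat del j x * a + x * ∑ i, σbar (del i a) j i := by
        simp only [sum_map_mul_apply_of_comp_transpose_eq_one σbar σ hσbarσ,
          sum_map_apply_mul_of_transpose_comp_eq_one σbar σhat hσbarσhat,
          delSigma, Finset.sum_mul, Finset.mul_sum]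
        rw [Finset.sum_comm]

omit [Module k Ω] [Module A Ω] [SMulCommClass A Aᵐᵒᵖ Ω] in
def nablaSigma (ω : Fin n → Ω) : (Ω →ₗ[Aᵐᵒᵖ] A) →ₗ[k] A where
  toFun f := ∑ i, delSigmaLinear σbar σhat del i (f (ω i))
  map_add' f g := by
    simp only [LinearMap.add_apply, map_add, Finset.sum_add_distrib]
  map_smul' c f := by
    simp only [LinearMap.smul_apply, map_smul, RingHom.id_apply, Finset.smul_sum]

omit [Module k Ω] [Module A Ω] [SMulCommClass A Aᵐᵒᵖ Ω] in
theorem nablaSigma_apply (ω : Fin n → Ω) (f : Ω →ₗ[Aᵐᵒᵖ] A) :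
    nablaSigma σbar σhat del ω f = ∑ i, delSigma σbar σhat del i (f (ω i)) :=
  rfl

end DelSigma

section Generators

omit [SMulCommClass A Aᵐᵒᵖ Ω]

variable {σbar : A → Matrix (Fin n) (Fin n) A} {ω : Fin n → Ω}

theorem apply_smul_generator
    (hrel' : ∀ (a : A) (i : Fin n), a • ω i = ∑ j, op (σbar a j i) • ω j)
    (f : Ω →ₗ[Aᵐᵒᵖ] A) (a : A) (i : Fin n) :
    f (a • ω i) = ∑ j, f (ω j) * σbar a j i := by
  simp only [hrel', map_sum, map_smul, op_smul_eq_mul]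

theorem apply_sum_smul_generators
    (hrel' : ∀ (a : A) (i : Fin n), a • ω i = ∑ j, op (σbar a j i) • ω j)
    (f : Ω →ₗ[Aᵐᵒᵖ] A) (c : Fin n → A) :
    f (∑ i, c i • ω i) = ∑ j, f (ω j) * ∑ i, σbar (c i) j i := by
  simp only [map_sum, apply_smul_generator hrel', Finset.mul_sum]
  exact Finset.sum_comm

end Generators

omit [Module k Ω] in
theorem nablaSigma_comp_lmul (σ σbar σhat : A →ₐ[k] Matrix (Fin n) (Fin n) A)
    (hfree : IsFreePair σ σbar σhat) (del : Fin n → (A →ₗ[k] A))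
    (hder : ∀ (a b : A) (i : Fin n),
      del i (a * b) = (∑ j, del j a * σ b j i) + a * del i b)
    (ω : Fin n → Ω)
    (hrel' : ∀ (a : A) (i : Fin n), a • ω i = ∑ j, op (σbar a j i) • ω j)
    (f : Ω →ₗ[Aᵐᵒᵖ] A) (a : A) :
    nablaSigma σbar σhat del ω (f ∘ₗ lmul a)
      = nablaSigma σbar σhat del ω f * a + f (∑ i, del i a • ω i) := by
  calc nablaSigma σbar σhat del ω (f ∘ₗ lmul a)
      = ∑ i, ∑ j, delSigma σbar σhat del i (f (ω j) * σbar a j i) := by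
        rw [nablaSigma_apply]
        refine Finset.sum_congr rfl fun i _ => ?_
        show delSigmaLinear σbar σhat del i (f (a • ω i)) = _
        rw [apply_smul_generator hrel', map_sum]
        rfl
    _ = ∑ j, (delSigma σbar σhat del j (f (ω j)) * a
          + f (ω j) * ∑ i, σbar (del i a) j i) := by
        rw [Finset.sum_comm]
        exact Finset.sum_congr rfl fun j _ => delSigma_leibniz σ σbar σhat del hfree hder _ a j
    _ = nablaSigma σbar σhat del ω f * a + f (∑ i, del i a • ω i) := by
        rw [Finset.sum_add_distrib, ← Finset.sum_mul, apply_sum_smul_generators hrel',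
          nablaSigma_apply]

theorem formula_defines_homConnection_general
    (σ σbar σhat : A →ₐ[k] Matrix (Fin n) (Fin n) A)
    (hfree : IsFreePair σ σbar σhat)
    (del : Fin n → (A →ₗ[k] A))
    (hder : ∀ (a b : A) (i : Fin n),
      del i (a * b) = (∑ j, del j a * σ b j i) + a * del i b)
    (d : A →ₗ[k] Ω)
    (ω : Fin n → Ω)
    (hrel' : ∀ (a : A) (i : Fin n), a • ω i = ∑ j, op (σbar a j i) • ω j)
    (hdrel : ∀ a : A, d a = ∑ i, del i a • ω i) :
    ∃ nabla : (Ω →ₗ[Aᵐᵒᵖ] A) →ₗ[k] A,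
      (∀ f : Ω →ₗ[Aᵐᵒᵖ] A,
        nabla f = ∑ i, delSigma σbar σhat del i (f (ω i))) ∧
      (∀ (f : Ω →ₗ[Aᵐᵒᵖ] A) (a : A),
        nabla (f ∘ₗ lmul a) = nabla f * a + f (d a)) :=
  ⟨nablaSigma σbar σhat del ω, nablaSigma_apply σbar σhat del ω, fun f a => by
    rw [hdrel, nablaSigma_comp_lmul σ σbar σhat hfree del hder ω hrel']⟩

/--
**Corollary 3.6.**  Given a free right twisted multi-derivation
`(∂, σ; σ̄, σ̂)` on `A` and any first order differential calculus `(Ω, d)` on `A`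
generated as a left `A`-module by `ω₁, …, ω_n` satisfying the relations
`ω_i a = Σ_j σ_ij(a) ω_j`, `a ω_i = Σ_j ω_j σ̄_ji(a)` and `d a = Σ_i ∂_i(a) ω_i`,
the formula `∇(f) = Σ_i ∂_i^σ(f(ω_i))` defines a hom-connection on `A` with
respect to `Ω`.
-/
theorem formula_defines_homConnection
    (σ σbar σhat : A →ₐ[k] Matrix (Fin n) (Fin n) A)
    (hfree : IsFreePair σ σbar σhat)
    (del : Fin n → (A →ₗ[k] A))
    (hder : ∀ (a b : A) (i : Fin n),
      del i (a * b) = (∑ j, del j a * σ b j i) + a * del i b)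
    (d : A →ₗ[k] Ω) (hd : ∀ a b : A, d (a * b) = a • d b + op b • d a)
    (ω : Fin n → Ω)
    (hgen : ∀ x : Ω, ∃ c : Fin n → A, x = ∑ i, c i • ω i)
    (hrel : ∀ (a : A) (i : Fin n), op a • ω i = ∑ j, σ a i j • ω j)
    (hrel' : ∀ (a : A) (i : Fin n), a • ω i = ∑ j, op (σbar a j i) • ω j)
    (hdrel : ∀ a : A, d a = ∑ i, del i a • ω i) :
    ∃ nabla : (Ω →ₗ[Aᵐᵒᵖ] A) →ₗ[k] A,
      (∀ f : Ω →ₗ[Aᵐᵒᵖ] A,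
        nabla f = ∑ i, delSigma σbar σhat del i (f (ω i))) ∧
      (∀ (f : Ω →ₗ[Aᵐᵒᵖ] A) (a : A),
        nabla (f ∘ₗ lmul a) = nabla f * a + f (d a)) :=
  formula_defines_homConnection_general σ σbar σhat hfree del hder d ω hrel' hdrel

end Stmt8
end
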